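/- arXiv:2009.03649 — 6 statements merged into one kernel-verified Lean document; each statement's English description precedes it below -/
import Mathlib

section
/- Consider the linear system x' = Fx + b·S̄·(c·x) where F = [[-(α+σ), 0], [α, -μ]], b = (1,0), c = (k₁γ, k₂λ), and S̄ ∈ (0,1] is a constant. The matrix F + S̄·b·c is Hurwitz (both eigenvalues have negative real part) if and only if S̄ < (α+σ)μ / (k₁γμ + k₂λα). -/
open Matrix

/-- A real square matrix is Hurwitz if every complex eigenvalue has
strictly negative real part. -/
def IsHurwitz {n : ℕ} (M : Matrix (Fin n) (Fin n) ℝ) : Prop :=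
  ∀ z ∈ spectrum ℂ (M.map (algebraMap ℝ ℂ)), z.re < 0

lemma mem_spectrum_fin_two (M : Matrix (Fin 2) (Fin 2) ℂ) (z : ℂ) :
    z ∈ spectrum ℂ M ↔ (z - M 0 0) * (z - M 1 1) - M 0 1 * M 1 0 = 0 := by
  rw [spectrum.mem_iff]
  simp only [Matrix.isUnit_iff_isUnit_det, isUnit_iff_ne_zero, not_ne_iff, Matrix.det_fin_two,
    Matrix.sub_apply, Matrix.algebraMap_matrix_apply]
  norm_num

lemma quadratic_neg_re_iff (t d : ℝ) :
    (∀ z : ℂ, z ^ 2 - (t : ℂ) * z + (d : ℂ) = 0 → z.re < 0) ↔ t < 0 ∧ 0 < d := by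
  constructor
  · intro h
    rcases le_or_gt 0 (t ^ 2 - 4 * d) with hdisc | hdisc
    · -- real roots
      set s := Real.sqrt (t ^ 2 - 4 * d) with hs
      have hs2 : s ^ 2 = t ^ 2 - 4 * d := Real.sq_sqrt hdisc
      have hsnn : 0 ≤ s := Real.sqrt_nonneg _
      have r1 : ((t + s) / 2) ^ 2 - t * ((t + s) / 2) + d = 0 := by nlinarith
      have r2 : ((t - s) / 2) ^ 2 - t * ((t - s) / 2) + d = 0 := by nlinarith
      have h1 : (((t + s) / 2 : ℝ) : ℂ).re < 0 := by
        apply h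
        have : ((((t + s) / 2 : ℝ) : ℂ)) ^ 2 - (t : ℂ) * (((t + s) / 2 : ℝ) : ℂ) + (d : ℂ)
            = ((((t + s) / 2) ^ 2 - t * ((t + s) / 2) + d : ℝ) : ℂ) := by push_cast; ring
        rw [this, r1]; norm_num
      have h2 : (((t - s) / 2 : ℝ) : ℂ).re < 0 := by
        apply h
        have : ((((t - s) / 2 : ℝ) : ℂ)) ^ 2 - (t : ℂ) * (((t - s) / 2 : ℝ) : ℂ) + (d : ℂ)
            = ((((t - s) / 2) ^ 2 - t * ((t - s) / 2) + d : ℝ) : ℂ) := by push_cast; ring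
        rw [this, r2]; norm_num
      rw [Complex.ofReal_re] at h1 h2
      constructor
      · linarith
      · nlinarith
    · -- complex conjugate roots
      have hd : 0 < d := by nlinarith [sq_nonneg t]
      refine ⟨?_, hd⟩
      set s := Real.sqrt (4 * d - t ^ 2) with hs
      have hs2 : s ^ 2 = 4 * d - t ^ 2 := Real.sq_sqrt (by linarith)
      set z : ℂ := ⟨t / 2, s / 2⟩ with hz
      have hroot : z ^ 2 - (t : ℂ) * z + (d : ℂ) = 0 := by
        rw [Complex.ext_iff]
        constructor
        · simp [hz, pow_two, Complex.mul_re, Complex.sub_re, Complex.add_re,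
            Complex.ofReal_re, Complex.ofReal_im]
          nlinarith
        · simp [hz, pow_two, Complex.mul_im, Complex.sub_im, Complex.add_im,
            Complex.ofReal_re, Complex.ofReal_im]
          ring
      have := h z hroot
      simp only [hz] at this
      linarith [this]
  · rintro ⟨ht, hd⟩ z hz
    rcases eq_or_ne z.im 0 with him | him
    · have hre : (z ^ 2 - (t : ℂ) * z + (d : ℂ)).re = 0 := by rw [hz]; rfl
      simp only [Complex.add_re, Complex.sub_re, Complex.mul_re, Complex.ofReal_re,
        Complex.ofReal_im, pow_two, him] at hre
      by_contra hcon
      push_neg at hcon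
      nlinarith
    · have him' : (z ^ 2 - (t : ℂ) * z + (d : ℂ)).im = 0 := by rw [hz]; rfl
      simp only [Complex.add_im, Complex.sub_im, Complex.mul_im, Complex.ofReal_re,
        Complex.ofReal_im, pow_two] at him'
      have : z.re = t / 2 := by
        field_simp
        rcases mul_eq_zero.1 (by linarith : (2 * z.re - t) * z.im = 0) with h | h
        · linarith
        · exact absurd h him
      rw [this]
      linarith

/-- Stability threshold for the SAIR feedback subsystem (Theorem 1). -/
theorem sair_feedback_stability
    (k₁ k₂ γ lam α σ μ Sbar : ℝ)
    (hk₁ : 0 < k₁) (hk₂ : 0 < k₂) (hγ : 0 < γ) (hlam : 0 < lam)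
    (hα : 0 < α) (hσ : 0 < σ) (hμ : 0 < μ)
    (hS0 : 0 < Sbar) (hS1 : Sbar ≤ 1) :
    IsHurwitz !![Sbar * k₁ * γ - (α + σ), Sbar * k₂ * lam; α, -μ] ↔
      Sbar < (α + σ) * μ / (k₁ * γ * μ + k₂ * lam * α) := by
  set t : ℝ := Sbar * k₁ * γ - (α + σ) - μ with htdef
  set d : ℝ := (α + σ) * μ - Sbar * (k₁ * γ * μ + k₂ * lam * α) with hddef
  have key : IsHurwitz !![Sbar * k₁ * γ - (α + σ), Sbar * k₂ * lam; α, -μ] ↔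
      (∀ z : ℂ, z ^ 2 - (t : ℂ) * z + (d : ℂ) = 0 → z.re < 0) := by
    unfold IsHurwitz
    refine forall_congr' fun z => ?_
    rw [mem_spectrum_fin_two]
    have heq : (z - ((!![Sbar * k₁ * γ - (α + σ), Sbar * k₂ * lam; α, -μ]).map
          (algebraMap ℝ ℂ)) 0 0) * (z - ((!![Sbar * k₁ * γ - (α + σ), Sbar * k₂ * lam; α,
          -μ]).map (algebraMap ℝ ℂ)) 1 1) - ((!![Sbar * k₁ * γ - (α + σ), Sbar * k₂ * lam; α,
          -μ]).map (algebraMap ℝ ℂ)) 0 1 * ((!![Sbar * k₁ * γ - (α + σ), Sbar * k₂ * lam; α,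
          -μ]).map (algebraMap ℝ ℂ)) 1 0 = z ^ 2 - (t : ℂ) * z + (d : ℂ) := by
      simp [Matrix.map_apply, htdef, hddef]
      push_cast
      ring
    rw [heq]
  rw [key, quadratic_neg_re_iff]
  have hD : 0 < k₁ * γ * μ + k₂ * lam * α := by positivity
  rw [lt_div_iff₀ hD]
  constructor
  · rintro ⟨-, hd⟩
    rw [hddef] at hd
    nlinarith
  · intro h
    have hd : 0 < d := by rw [hddef]; nlinarith
    refine ⟨?_, hd⟩
    rw [hddef] at hd
    rw [htdef]
    nlinarith [mul_pos hS0 (mul_pos hk₂ (mul_pos hlam hα))]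
end

section
/- For the positive transfer function G(s) = (k₁γ(s+μ) + k₂λα)/((s+α+σ)(s+μ)) with positive parameters, the H∞ norm (supremum of |G(iω)| over real ω) is attained at ω = 0, i.e., |G(iω)| ≤ G(0) for all real ω. -/
/-!
In partial fractions, `G(s) = c₁/(s+a) + c₂/((s+a)(s+μ))` with `c₁ = k₁γ ≥ 0`, `c₂ = k₂λα ≥ 0`
and `a = α + σ`. On the imaginary axis `|1/(iω+b)| ≤ 1/b` for `b > 0`, so the triangle inequality
bounds `|G(iω)|` by `c₁/a + c₂/(aμ) = G(0)`.
-/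

open Complex

theorem norm_inv_le_inv_re {z : ℂ} (hz : 0 < z.re) : ‖z⁻¹‖ ≤ z.re⁻¹ := by
  rw [norm_inv]
  exact inv_anti₀ hz (re_le_norm z)

theorem norm_inv_I_mul_add_le {b : ℝ} (hb : 0 < b) (ω : ℝ) : ‖(I * ω + b)⁻¹‖ ≤ b⁻¹ := by
  simpa using norm_inv_le_inv_re (z := I * ω + b) (by simpa using hb)

theorem I_mul_add_ne_zero {b : ℝ} (hb : b ≠ 0) (ω : ℝ) : I * ω + b ≠ 0 := fun h => by
  simpa [hb] using congrArg re h

noncomputable def transferFn (c₁ c₂ a μ : ℝ) (s : ℂ) : ℂ :=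
  (c₁ * (s + μ) + c₂) / ((s + a) * (s + μ))

theorem transferFn_eq_add {c₁ c₂ a μ : ℝ} {s : ℂ} (ha : s + a ≠ 0) (hμ : s + μ ≠ 0) :
    transferFn c₁ c₂ a μ s = c₁ * (s + a)⁻¹ + c₂ * ((s + a)⁻¹ * (s + μ)⁻¹) := by
  unfold transferFn
  field_simp

theorem transferFn_zero {c₁ c₂ a μ : ℝ} (ha : a ≠ 0) (hμ : μ ≠ 0) :
    transferFn c₁ c₂ a μ 0 = ((c₁ / a + c₂ / (a * μ) : ℝ) : ℂ) := by
  have ha' : (a : ℂ) ≠ 0 := by exact_mod_cast ha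
  have hμ' : (μ : ℂ) ≠ 0 := by exact_mod_cast hμ
  unfold transferFn
  push_cast
  rw [zero_add, zero_add]
  field_simp

section NonnegCoefficients

variable {c₁ c₂ a μ : ℝ}

theorem norm_transferFn_zero (hc₁ : 0 ≤ c₁) (hc₂ : 0 ≤ c₂) (ha : 0 < a) (hμ : 0 < μ) :
    ‖transferFn c₁ c₂ a μ 0‖ = c₁ / a + c₂ / (a * μ) := by
  rw [transferFn_zero ha.ne' hμ.ne', norm_real, Real.norm_of_nonneg (by positivity)]

theorem norm_transferFn_I_mul_le (hc₁ : 0 ≤ c₁) (hc₂ : 0 ≤ c₂) (ha : 0 < a) (hμ : 0 < μ)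
    (ω : ℝ) :
    ‖transferFn c₁ c₂ a μ (I * ω)‖ ≤ c₁ / a + c₂ / (a * μ) := by
  rw [transferFn_eq_add (I_mul_add_ne_zero ha.ne' ω) (I_mul_add_ne_zero hμ.ne' ω)]
  calc _ ≤ c₁ * ‖(I * ω + a)⁻¹‖ + c₂ * (‖(I * ω + a)⁻¹‖ * ‖(I * ω + μ)⁻¹‖) := by
        refine (norm_add_le _ _).trans_eq ?_
        simp [abs_of_nonneg hc₁, abs_of_nonneg hc₂]
    _ ≤ c₁ * a⁻¹ + c₂ * (a⁻¹ * μ⁻¹) := by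
        gcongr
        exacts [norm_inv_I_mul_add_le ha ω, norm_inv_I_mul_add_le ha ω,
          norm_inv_I_mul_add_le hμ ω]
    _ = c₁ / a + c₂ / (a * μ) := by field_simp

theorem norm_transferFn_I_mul_le_norm_zero (hc₁ : 0 ≤ c₁) (hc₂ : 0 ≤ c₂) (ha : 0 < a)
    (hμ : 0 < μ) (ω : ℝ) :
    ‖transferFn c₁ c₂ a μ (I * ω)‖ ≤ ‖transferFn c₁ c₂ a μ 0‖ := by
  rw [norm_transferFn_zero hc₁ hc₂ ha hμ]
  exact norm_transferFn_I_mul_le hc₁ hc₂ ha hμ ω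

end NonnegCoefficients

/-- The H∞ norm of the positive transfer function
G(s) = (k₁γ(s+μ) + k₂λα)/((s+α+σ)(s+μ)) is attained at ω = 0:
the modulus on the imaginary axis is maximized at the origin. -/
theorem sair_Hinf_norm_at_zero
    (k₁ k₂ γ lam α σ μ : ℝ)
    (hk₁ : 0 < k₁) (hk₂ : 0 < k₂) (hγ : 0 < γ) (hlam : 0 < lam)
    (hα : 0 < α) (hσ : 0 < σ) (hμ : 0 < μ)
    (G : ℂ → ℂ)
    (hG : ∀ s : ℂ, G s = ((k₁ : ℂ) * γ * (s + μ) + (k₂ : ℂ) * lam * α) /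
        ((s + α + σ) * (s + μ))) :
    ∀ ω : ℝ, ‖G (Complex.I * ω)‖ ≤ ‖G 0‖ := by
  have hG' : G = transferFn (k₁ * γ) (k₂ * lam * α) (α + σ) μ := funext fun s => by
    rw [hG, transferFn]
    push_cast
    ring
  rw [hG']
  exact norm_transferFn_I_mul_le_norm_zero (by positivity) (by positivity) (by positivity) hμ
end

section
/- Let S, A, I, R solve the SAIR system with R₀ = -cF⁻¹b = (k₁γμ + k₂λα)/((α+σ)μ), where x = (A,I), F = [[-(α+σ),0],[α,-μ]], b = (1,0)ᵀ, c = (k₁γ, k₂λ). Suppose S(t) → S̄ > 0 and x(t) → 0 as t → ∞, and ∫₀^∞ x(τ)dτ converges. Then log(S(0)/S̄) = -cF⁻¹x(0) + R₀(S(0) - S̄). -/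
/-!
Put `w = -c F⁻¹`, so that `w F = -c` and `w ⬝ b = -c F⁻¹ b = R₀`. Along any solution with `S > 0`
the quantity `w ⬝ x - log S + R₀ S` is conserved: the linear part contributes `-c ⬝ x + R₀ S (c ⬝ x)`,
which `-log S` and `R₀ S` cancel. Comparing its value at `t = 0` with its limit as `t → ∞` gives the
final size relation. Positivity of `S` comes from `S t = S 0 · exp (-∫₀ᵗ c ⬝ x)`.
-/

open Matrix MeasureTheory Filter Topology

theorem eq_mul_exp_integral_of_hasDerivAt {y a : ℝ → ℝ} (ha : Continuous a)
    (hy : ∀ t, HasDerivAt y (a t * y t) t) (t : ℝ) :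
    y t = y 0 * Real.exp (∫ s in (0:ℝ)..t, a s) := by
  set A : ℝ → ℝ := fun t => ∫ s in (0:ℝ)..t, a s
  have hA : ∀ t, HasDerivAt A (a t) t := fun t => (ha.integral_hasStrictDerivAt 0 t).hasDerivAt
  have hderiv : ∀ t, HasDerivAt (fun t => y t * Real.exp (-A t)) 0 t := fun t => by
    have := (hy t).mul (hA t).neg.exp
    refine this.congr_deriv ?_
    ring
  have hconst := is_const_of_deriv_eq_zero (fun t => (hderiv t).differentiableAt)
    (fun t => (hderiv t).deriv) t 0
  simp only [A, intervalIntegral.integral_same, neg_zero, Real.exp_zero, mul_one] at hconst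
  rw [← hconst, mul_assoc, ← Real.exp_add, neg_add_cancel, Real.exp_zero, mul_one]

theorem pos_of_hasDerivAt_mul_self {y a : ℝ → ℝ} (ha : Continuous a)
    (hy : ∀ t, HasDerivAt y (a t * y t) t) (h0 : 0 < y 0) (t : ℝ) : 0 < y t := by
  rw [eq_mul_exp_integral_of_hasDerivAt ha hy t]
  positivity

theorem HasDerivAt.dotProduct_const {n : Type*} [Fintype n] {x : ℝ → n → ℝ} {x' : n → ℝ} {t : ℝ}
    (w : n → ℝ) (hx : ∀ i, HasDerivAt (fun τ => x τ i) (x' i) t) :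
    HasDerivAt (fun τ => w ⬝ᵥ x τ) (w ⬝ᵥ x') t :=
  HasDerivAt.fun_sum fun i _ => (hx i).const_mul (w i)

section FirstIntegral

variable {n : Type*} [Fintype n] {F : Matrix n n ℝ} {b c w : n → ℝ} {S : ℝ → ℝ}
  {x : ℝ → n → ℝ}

theorem hasDerivAt_first_integral (hw : w ᵥ* F = -c) {t : ℝ} (hSt : 0 < S t)
    (hS : HasDerivAt S (-(S t) * (c ⬝ᵥ x t)) t)
    (hx : ∀ i, HasDerivAt (fun τ => x τ i) ((F *ᵥ x t) i + S t * (c ⬝ᵥ x t) * b i) t) :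
    HasDerivAt (fun τ => w ⬝ᵥ x τ - Real.log (S τ) + (w ⬝ᵥ b) * S τ) 0 t := by
  have hwx := HasDerivAt.dotProduct_const w hx
  refine ((hwx.sub (hS.log hSt.ne')).add (hS.const_mul (w ⬝ᵥ b))).congr_deriv ?_
  have : w ⬝ᵥ (fun i => (F *ᵥ x t) i + S t * (c ⬝ᵥ x t) * b i)
      = -(c ⬝ᵥ x t) + S t * (c ⬝ᵥ x t) * (w ⬝ᵥ b) := by
    change w ⬝ᵥ (F *ᵥ x t + (S t * (c ⬝ᵥ x t)) • b) = _
    rw [dotProduct_add, dotProduct_smul, dotProduct_mulVec, hw, neg_dotProduct, smul_eq_mul]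
  rw [this]
  field_simp
  ring

theorem final_size_log [DecidableEq n] (hF : IsUnit F.det) (hS0 : 0 < S 0)
    (hS : ∀ t, HasDerivAt S (-(S t) * (c ⬝ᵥ x t)) t)
    (hx : ∀ i t, HasDerivAt (fun τ => x τ i) ((F *ᵥ x t) i + S t * (c ⬝ᵥ x t) * b i) t)
    {Sbar : ℝ} (hSbar : 0 < Sbar) (hSlim : Tendsto S atTop (𝓝 Sbar))
    (hxlim : ∀ i, Tendsto (fun t => x t i) atTop (𝓝 0)) :
    Real.log (S 0 / Sbar) = -(c ⬝ᵥ (F⁻¹ *ᵥ x 0)) + -(c ⬝ᵥ (F⁻¹ *ᵥ b)) * (S 0 - Sbar) := by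
  set w := -(c ᵥ* F⁻¹)
  have hw : w ᵥ* F = -c := by rw [neg_vecMul, vecMul_vecMul, nonsing_inv_mul _ hF, vecMul_one]
  have hxc : Continuous x :=
    continuous_pi fun i => continuous_iff_continuousAt.2 fun t => (hx i t).continuousAt
  have hSpos : ∀ t, 0 < S t :=
    pos_of_hasDerivAt_mul_self (a := fun t => -(c ⬝ᵥ x t)) (continuous_const.dotProduct hxc).neg
      (fun t => (hS t).congr_deriv (by ring)) hS0
  set V : ℝ → ℝ := fun τ => w ⬝ᵥ x τ - Real.log (S τ) + (w ⬝ᵥ b) * S τ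
  have hV : ∀ t, HasDerivAt V 0 t := fun t =>
    hasDerivAt_first_integral hw (hSpos t) (hS t) (fun i => hx i t)
  have hVconst : ∀ t, V t = V 0 := fun t =>
    is_const_of_deriv_eq_zero (fun t => (hV t).differentiableAt) (fun t => (hV t).deriv) t 0
  have hVlim : Tendsto V atTop (𝓝 (w ⬝ᵥ 0 - Real.log Sbar + (w ⬝ᵥ b) * Sbar)) :=
    (((continuous_const.dotProduct continuous_id).tendsto 0).comp
      (tendsto_pi_nhds.2 hxlim)).sub ((Real.continuousAt_log hSbar.ne').tendsto.comp hSlim)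
      |>.add (hSlim.const_mul _)
  have hV0 := tendsto_nhds_unique tendsto_const_nhds (hVlim.congr hVconst)
  simp only [V, dotProduct_zero] at hV0
  rw [Real.log_div hS0.ne' hSbar.ne', dotProduct_mulVec, dotProduct_mulVec, ← neg_dotProduct,
    ← neg_dotProduct]
  linarith

end FirstIntegral

theorem sair_reproduction_number_eq (a α μ c₀ c₁ : ℝ) (ha : a ≠ 0) (hμ : μ ≠ 0) :
    -(![c₀, c₁] ⬝ᵥ ((!![-a, 0; α, -μ])⁻¹ *ᵥ ![1, 0])) = (c₀ * μ + c₁ * α) / (a * μ) := by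
  rw [Matrix.inv_def, adjugate_fin_two_of, det_fin_two_of]
  simp [dotProduct, Fin.sum_univ_two]
  field_simp
  ring

theorem sair_final_size_log_general
    (k₁ k₂ γ lam α σ μ : ℝ)
    (hα : 0 < α) (hσ : 0 < σ) (hμ : 0 < μ)
    (F : Matrix (Fin 2) (Fin 2) ℝ) (hF : F = !![-(α + σ), 0; α, -μ])
    (b c : Fin 2 → ℝ) (hb : b = ![1, 0]) (hc : c = ![k₁ * γ, k₂ * lam])
    (S : ℝ → ℝ) (x : ℝ → Fin 2 → ℝ)
    (hS0 : 0 < S 0)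
    (hS : ∀ t, HasDerivAt S (-(S t) * (c ⬝ᵥ x t)) t)
    (hx : ∀ i t, HasDerivAt (fun τ => x τ i)
        ((F *ᵥ x t) i + S t * (c ⬝ᵥ x t) * b i) t)
    (Sbar : ℝ) (hSbar : 0 < Sbar)
    (hSlim : Tendsto S atTop (𝓝 Sbar))
    (hxlim : ∀ i, Tendsto (fun t => x t i) atTop (𝓝 0)) :
    Real.log (S 0 / Sbar) =
      -(c ⬝ᵥ (F⁻¹ *ᵥ x 0)) +
        (k₁ * γ * μ + k₂ * lam * α) / ((α + σ) * μ) * (S 0 - Sbar) := by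
  have hασ : α + σ ≠ 0 := by positivity
  have hdet : IsUnit F.det := by
    rw [hF, det_fin_two_of, isUnit_iff_ne_zero]
    convert mul_ne_zero hασ hμ.ne' using 1
    ring
  rw [final_size_log hdet hS0 hS hx hSbar hSlim hxlim, hF, hb, hc,
    sair_reproduction_number_eq _ _ _ _ _ hασ hμ.ne']

/-- Final size relation for the SAIR model (Theorem 2, first identity). -/
theorem sair_final_size_log
    (k₁ k₂ γ lam α σ μ : ℝ)
    (hk₁ : 0 < k₁) (hk₂ : 0 < k₂) (hγ : 0 < γ) (hlam : 0 < lam)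
    (hα : 0 < α) (hσ : 0 < σ) (hμ : 0 < μ)
    (F : Matrix (Fin 2) (Fin 2) ℝ) (hF : F = !![-(α + σ), 0; α, -μ])
    (b c : Fin 2 → ℝ) (hb : b = ![1, 0]) (hc : c = ![k₁ * γ, k₂ * lam])
    (S : ℝ → ℝ) (x : ℝ → Fin 2 → ℝ)
    (hS0 : 0 < S 0) (hx0 : ∀ i, 0 ≤ x 0 i)
    (hS : ∀ t, HasDerivAt S (-(S t) * (c ⬝ᵥ x t)) t)
    (hx : ∀ i t, HasDerivAt (fun τ => x τ i)
        ((F *ᵥ x t) i + S t * (c ⬝ᵥ x t) * b i) t)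
    (Sbar : ℝ) (hSbar : 0 < Sbar)
    (hSlim : Tendsto S atTop (𝓝 Sbar))
    (hxlim : ∀ i, Tendsto (fun t => x t i) atTop (𝓝 0))
    (hxint : ∀ i, IntegrableOn (fun t => x t i) (Set.Ici 0)) :
    Real.log (S 0 / Sbar) =
      -(c ⬝ᵥ (F⁻¹ *ᵥ x 0)) +
        (k₁ * γ * μ + k₂ * lam * α) / ((α + σ) * μ) * (S 0 - Sbar) :=
  sair_final_size_log_general k₁ k₂ γ lam α σ μ hα hσ hμ F hF b c hb hc S x hS0 hS hx Sbar hSbar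
    hSlim hxlim
end

section
/- Under the same hypotheses as the final size relation, the limit R̄ = lim_{t→∞} R(t) of the removed fraction satisfies R̄ = R(0) - EF⁻¹x(0) - EF⁻¹b(S(0) - S̄), where E = (σ, μ). -/
open Matrix MeasureTheory Filter Topology

/-- Final size relation for the removed fraction (Theorem 2, second identity). -/
theorem sair_final_size_removed
    (k₁ k₂ γ lam α σ μ : ℝ)
    (hk₁ : 0 < k₁) (hk₂ : 0 < k₂) (hγ : 0 < γ) (hlam : 0 < lam)
    (hα : 0 < α) (hσ : 0 < σ) (hμ : 0 < μ)
    (F : Matrix (Fin 2) (Fin 2) ℝ) (hF : F = !![-(α + σ), 0; α, -μ])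
    (b c E : Fin 2 → ℝ) (hb : b = ![1, 0]) (hc : c = ![k₁ * γ, k₂ * lam])
    (hE : E = ![σ, μ])
    (S R : ℝ → ℝ) (x : ℝ → Fin 2 → ℝ)
    (hS0 : 0 < S 0) (hx0 : ∀ i, 0 ≤ x 0 i)
    (hS : ∀ t, HasDerivAt S (-(S t) * (c ⬝ᵥ x t)) t)
    (hx : ∀ i t, HasDerivAt (fun τ => x τ i)
        ((F *ᵥ x t) i + S t * (c ⬝ᵥ x t) * b i) t)
    (hR : ∀ t, HasDerivAt R (E ⬝ᵥ x t) t)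
    (Sbar Rbar : ℝ) (hSbar : 0 < Sbar)
    (hSlim : Tendsto S atTop (𝓝 Sbar))
    (hRlim : Tendsto R atTop (𝓝 Rbar))
    (hxlim : ∀ i, Tendsto (fun t => x t i) atTop (𝓝 0))
    (hxint : ∀ i, IntegrableOn (fun t => x t i) (Set.Ici 0)) :
    Rbar = R 0 - E ⬝ᵥ (F⁻¹ *ᵥ x 0) - (E ⬝ᵥ (F⁻¹ *ᵥ b)) * (S 0 - Sbar) := by
  have hxc : ∀ i, Continuous fun t => x t i :=
    fun i => continuous_iff_continuousAt.mpr fun t => (hx i t).continuousAt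
  have hcx : Continuous fun t => c ⬝ᵥ x t := by
    simp only [dotProduct]
    exact continuous_finset_sum _ fun j _ => continuous_const.mul (hxc j)
  have hScont : Continuous S :=
    continuous_iff_continuousAt.mpr fun t => (hS t).continuousAt
  set v : Fin 2 → ℝ := fun i => ∫ t in Set.Ioi (0:ℝ), x t i with hv
  have hvten : ∀ i, Tendsto (fun T => ∫ t in (0:ℝ)..T, x t i) atTop (𝓝 (v i)) :=
    fun i => intervalIntegral_tendsto_integral_Ioi 0 ((hxint i).mono_set Set.Ioi_subset_Ici_self) tendsto_id
  have hSint : ∀ T : ℝ, (∫ t in (0:ℝ)..T, S t * (c ⬝ᵥ x t)) = S 0 - S T := by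
    intro T
    have h := intervalIntegral.integral_eq_sub_of_hasDerivAt (f := S)
      (f' := fun t => -(S t) * (c ⬝ᵥ x t)) (fun t _ => hS t)
      ((hScont.neg.mul hcx).intervalIntegrable 0 T)
    simp only [neg_mul] at h
    rw [intervalIntegral.integral_neg] at h
    linarith
  have hSI : Tendsto (fun T => ∫ t in (0:ℝ)..T, S t * (c ⬝ᵥ x t)) atTop
      (𝓝 (S 0 - Sbar)) := by
    simp only [hSint]
    exact tendsto_const_nhds.sub hSlim
  have hFv : ∀ i, (∑ j, F i j * v j) + b i * (S 0 - Sbar) = -(x 0 i) := by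
    intro i
    have hcont : Continuous fun t => (F *ᵥ x t) i + S t * (c ⬝ᵥ x t) * b i := by
      simp only [mulVec, dotProduct]
      exact (continuous_finset_sum _ fun j _ => continuous_const.mul (hxc j)).add
        ((hScont.mul hcx).mul continuous_const)
    have hftc : ∀ T : ℝ,
        (∫ t in (0:ℝ)..T, ((F *ᵥ x t) i + S t * (c ⬝ᵥ x t) * b i)) = x T i - x 0 i :=
      fun T => intervalIntegral.integral_eq_sub_of_hasDerivAt (fun t _ => hx i t)
        (hcont.intervalIntegrable 0 T)
    have hsplit : ∀ T : ℝ,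
        (∫ t in (0:ℝ)..T, ((F *ᵥ x t) i + S t * (c ⬝ᵥ x t) * b i))
        = (∑ j, F i j * ∫ t in (0:ℝ)..T, x t j)
          + b i * ∫ t in (0:ℝ)..T, S t * (c ⬝ᵥ x t) := by
      intro T
      have h1 : IntervalIntegrable (fun t => (F *ᵥ x t) i) volume 0 T := by
        refine Continuous.intervalIntegrable ?_ 0 T
        simp only [mulVec, dotProduct]
        exact continuous_finset_sum _ fun j _ => continuous_const.mul (hxc j)
      have h2 : IntervalIntegrable (fun t => S t * (c ⬝ᵥ x t) * b i) volume 0 T :=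
        ((hScont.mul hcx).mul continuous_const).intervalIntegrable 0 T
      rw [intervalIntegral.integral_add h1 h2]
      congr 1
      · simp only [mulVec, dotProduct]
        rw [intervalIntegral.integral_finset_sum]
        · exact Finset.sum_congr rfl fun j _ => intervalIntegral.integral_const_mul _ _
        · exact fun j _ => (continuous_const.mul (hxc j)).intervalIntegrable 0 T
      · rw [intervalIntegral.integral_mul_const]; ring
    have hlim1 : Tendsto (fun T => x T i - x 0 i) atTop
        (𝓝 ((∑ j, F i j * v j) + b i * (S 0 - Sbar))) := by
      exact ((tendsto_finset_sum _ fun j _ => (hvten j).const_mul _).add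
        (hSI.const_mul _)).congr fun T => by rw [← hsplit T, hftc T]
    have hlim2 : Tendsto (fun T => x T i - x 0 i) atTop (𝓝 (0 - x 0 i)) :=
      (hxlim i).sub tendsto_const_nhds
    have := tendsto_nhds_unique hlim1 hlim2
    linarith
  have hRv : Rbar = R 0 + ∑ j, E j * v j := by
    have hcont : Continuous fun t => E ⬝ᵥ x t := by
      simp only [dotProduct]
      exact continuous_finset_sum _ fun j _ => continuous_const.mul (hxc j)
    have hftc : ∀ T : ℝ, (∫ t in (0:ℝ)..T, E ⬝ᵥ x t) = R T - R 0 :=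
      fun T => intervalIntegral.integral_eq_sub_of_hasDerivAt (fun t _ => hR t)
        (hcont.intervalIntegrable 0 T)
    have hsplit : ∀ T : ℝ, (∫ t in (0:ℝ)..T, E ⬝ᵥ x t)
        = ∑ j, E j * ∫ t in (0:ℝ)..T, x t j := by
      intro T
      simp only [dotProduct]
      rw [intervalIntegral.integral_finset_sum]
      · exact Finset.sum_congr rfl fun j _ => intervalIntegral.integral_const_mul _ _
      · exact fun j _ => (continuous_const.mul (hxc j)).intervalIntegrable 0 T
    have hlim1 : Tendsto (fun T => R T - R 0) atTop (𝓝 (∑ j, E j * v j)) := by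
      exact (tendsto_finset_sum _ fun j _ => (hvten j).const_mul _).congr
        fun T => by rw [← hsplit T, hftc T]
    have hlim2 : Tendsto (fun T => R T - R 0) atTop (𝓝 (Rbar - R 0)) :=
      hRlim.sub tendsto_const_nhds
    have := tendsto_nhds_unique hlim1 hlim2
    linarith
  have hdetval : F.det = (α + σ) * μ := by
    rw [hF]; simp [Matrix.det_fin_two_of]; ring
  have hdet : IsUnit F.det := by
    rw [hdetval]
    exact isUnit_iff_ne_zero.mpr (by positivity)
  have hveq : v = F⁻¹ *ᵥ (-(x 0) - (S 0 - Sbar) • b) := by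
    have hFveq : F *ᵥ v = -(x 0) - (S 0 - Sbar) • b := by
      funext i
      have h := hFv i
      simp only [mulVec, dotProduct, Pi.sub_apply, Pi.neg_apply, Pi.smul_apply,
        smul_eq_mul]
      linarith
    rw [← hFveq, Matrix.mulVec_mulVec, Matrix.nonsing_inv_mul F hdet, Matrix.one_mulVec]
  have hEv : (E ⬝ᵥ v) = ∑ j, E j * v j := rfl
  rw [hRv, ← hEv, hveq, Matrix.mulVec_sub, Matrix.mulVec_neg, Matrix.mulVec_smul,
    dotProduct_sub, dotProduct_neg, dotProduct_smul, smul_eq_mul]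
  ring
end

section
/- In the heterogeneous SAIR network model, the subsystem of class k with constant feedback S̄_k is asymptotically stable if and only if S̄_k < ⟨f⟩(α+σ)μ / (ψ₁ₖγμ + ψ₂ₖλα), i.e., the 2×2 matrix [[S̄_k ψ₁ₖγ/⟨f⟩ - (α+σ), S̄_k ψ₂ₖλ/⟨f⟩], [α, -μ]] is Hurwitz iff this inequality holds. -/
open Matrix

lemma hurwitz_root_iff (a b c d : ℝ) (z : ℂ) :
    z ∈ spectrum ℂ ((!![a,b;c,d]).map (algebraMap ℝ ℂ)) ↔
      z^2 - ((a+d:ℝ):ℂ)*z + ((a*d-b*c:ℝ):ℂ) = 0 := by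
  have hmap : (!![a,b;c,d]).map (algebraMap ℝ ℂ) = !![(a:ℂ),(b:ℂ);(c:ℂ),(d:ℂ)] := by
    ext i j; fin_cases i <;> fin_cases j <;> simp
  rw [hmap, spectrum.mem_iff, Matrix.isUnit_iff_isUnit_det, isUnit_iff_ne_zero, not_ne_iff]
  have hdet : (algebraMap ℂ (Matrix (Fin 2) (Fin 2) ℂ) z - !![(a:ℂ),(b:ℂ);(c:ℂ),(d:ℂ)]).det
      = z^2 - ((a+d:ℝ):ℂ)*z + ((a*d-b*c:ℝ):ℂ) := by
    simp [Matrix.det_fin_two, Matrix.algebraMap_eq_diagonal]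
    ring
  rw [hdet]

lemma quad_roots_neg_iff (T D : ℝ) :
    (∀ z : ℂ, z^2 - (T:ℂ)*z + (D:ℂ) = 0 → z.re < 0) ↔ (T < 0 ∧ 0 < D) := by
  constructor
  · intro h
    by_contra hc
    push_neg at hc
    rcases le_or_gt (T^2 - 4*D) 0 with hΔ | hΔ
    · by_cases hT : T < 0
      · have hD := hc hT; nlinarith
      · push_neg at hT
        set s := Real.sqrt (4*D - T^2) with hs
        have hs2 : s^2 = 4*D - T^2 := Real.sq_sqrt (by linarith)
        have h1 : ((s:ℂ))^2 = 4*(D:ℂ) - (T:ℂ)^2 := by exact_mod_cast congrArg (Complex.ofReal) hs2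
        have key : ((T:ℂ)/2 + (s:ℂ)/2*Complex.I)^2 - (T:ℂ)*((T:ℂ)/2 + (s:ℂ)/2*Complex.I) + (D:ℂ) = 0 := by
          linear_combination (Complex.I^2/4) * h1 + ((D:ℂ) - (T:ℂ)^2/4) * Complex.I_sq
        have hre := h _ key
        simp at hre
        linarith
    · set s := Real.sqrt (T^2 - 4*D) with hs
      have hs2 : s^2 = T^2 - 4*D := Real.sq_sqrt (by linarith)
      have hsnn : 0 ≤ s := Real.sqrt_nonneg _
      set x := (T + s)/2 with hx
      have h0 : x^2 - T*x + D = 0 := by rw [hx]; nlinarith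
      have hroot : ((x:ℝ):ℂ)^2 - (T:ℂ)*((x:ℝ):ℂ) + (D:ℂ) = 0 := by
        exact_mod_cast congrArg (Complex.ofReal) h0
      have hre := h _ hroot
      simp at hre
      by_cases hT : T < 0
      · have hD := hc hT
        have : s ≥ -T := by nlinarith
        rw [hx] at hre; linarith
      · push_neg at hT
        have : 0 ≤ x := by rw [hx]; positivity
        linarith
  · rintro ⟨hT, hD⟩ z hz
    set x := z.re with hxd
    set y := z.im with hyd
    rw [Complex.ext_iff] at hz
    simp [pow_two, Complex.mul_re, Complex.mul_im] at hz
    obtain ⟨e1, e2⟩ := hz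
    have him : y * (2*x - T) = 0 := by linear_combination e2
    show x < 0
    rcases mul_eq_zero.1 him with hy | hx2
    · by_contra hx0
      push_neg at hx0
      rw [hxd] at hx0
      rw [hyd] at hy
      nlinarith [e1, hy, hx0]
    · rw [hxd] at hx2 ⊢
      linarith

lemma hurwitz2 (a b c d : ℝ) :
    IsHurwitz !![a,b;c,d] ↔ (a + d < 0 ∧ 0 < a*d - b*c) := by
  unfold IsHurwitz
  rw [← quad_roots_neg_iff]
  refine forall_congr' fun z => ?_
  rw [hurwitz_root_iff]

/-- Stability threshold for the class-k subsystem of the heterogeneous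
SAIR network model (Theorem 5). -/
theorem sair_network_class_stability
    (γ lam α σ μ ψ₁ ψ₂ f Sbar : ℝ)
    (hγ : 0 < γ) (hlam : 0 < lam) (hα : 0 < α) (hσ : 0 < σ) (hμ : 0 < μ)
    (hψ₁ : 0 < ψ₁) (hψ₂ : 0 < ψ₂) (hf : 0 < f)
    (hS0 : 0 < Sbar) (hS1 : Sbar ≤ 1) :
    IsHurwitz !![Sbar * ψ₁ * γ / f - (α + σ), Sbar * ψ₂ * lam / f; α, -μ] ↔
      Sbar < f * (α + σ) * μ / (ψ₁ * γ * μ + ψ₂ * lam * α) := by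
  rw [hurwitz2]
  have hden : 0 < ψ₁ * γ * μ + ψ₂ * lam * α := by positivity
  have hne : f ≠ 0 := ne_of_gt hf
  have e1 : Sbar * ψ₁ * γ / f - (α + σ) + -μ
      = (Sbar * ψ₁ * γ - f * (α + σ + μ)) / f := by field_simp; ring
  have e2 : (Sbar * ψ₁ * γ / f - (α + σ)) * -μ - Sbar * ψ₂ * lam / f * α
      = (f * (α + σ) * μ - Sbar * (ψ₁ * γ * μ + ψ₂ * lam * α)) / f := by
    field_simp; ring
  rw [e1, e2, lt_div_iff₀ hden]
  constructor
  · rintro ⟨-, h2⟩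
    rw [lt_div_iff₀ hf, zero_mul] at h2
    linarith
  · intro hS
    constructor
    · apply div_neg_of_neg_of_pos _ hf
      nlinarith [mul_pos (mul_pos (mul_pos hS0 hψ₂) hlam) hα, mul_pos hf (mul_pos hμ hμ)]
    · apply div_pos _ hf
      linarith
end

section
/- For the 2×2 matrix M(S̄) = [[S̄k₁γ - (α+σ), S̄k₂λ], [α, -μ]] with all parameters positive, the condition det(M(S̄)) > 0 is equivalent to S̄·R₀ < 1 where R₀ = (k₁γμ + k₂λα)/((α+σ)μ), and det(M(S̄)) > 0 implies trace(M(S̄)) < 0. -/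
open Matrix

/-- For the SAIR feedback matrix M(S̄), positivity of the determinant is
equivalent to S̄·R₀ < 1, and it implies negativity of the trace. -/
theorem sair_det_trace_condition
    (k₁ k₂ γ lam α σ μ Sbar : ℝ)
    (hk₁ : 0 < k₁) (hk₂ : 0 < k₂) (hγ : 0 < γ) (hlam : 0 < lam)
    (hα : 0 < α) (hσ : 0 < σ) (hμ : 0 < μ) (hSbar : 0 < Sbar)
    (M : Matrix (Fin 2) (Fin 2) ℝ)
    (hM : M = !![Sbar * k₁ * γ - (α + σ), Sbar * k₂ * lam; α, -μ]) :
    (0 < M.det ↔ Sbar * ((k₁ * γ * μ + k₂ * lam * α) / ((α + σ) * μ)) < 1) ∧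
      (0 < M.det → M.trace < 0) := by
  subst hM
  have hdet : (!![Sbar * k₁ * γ - (α + σ), Sbar * k₂ * lam; α, -μ] : Matrix (Fin 2) (Fin 2) ℝ).det
      = (Sbar * k₁ * γ - (α + σ)) * (-μ) - Sbar * k₂ * lam * α := by
    simp [Matrix.det_fin_two_of]
  have htr : (!![Sbar * k₁ * γ - (α + σ), Sbar * k₂ * lam; α, -μ] : Matrix (Fin 2) (Fin 2) ℝ).trace
      = (Sbar * k₁ * γ - (α + σ)) + (-μ) := by
    simp [Matrix.trace_fin_two_of]
  have hden : 0 < (α + σ) * μ := by positivity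
  constructor
  · rw [hdet, mul_div_assoc', div_lt_one hden]
    constructor
    · intro h; nlinarith
    · intro h; nlinarith
  · intro h
    rw [hdet] at h
    rw [htr]
    nlinarith [mul_pos (mul_pos hSbar hk₂) hlam, mul_pos hα hμ]
end
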